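/- (Extended small gain theorem, version (i)) With the same feedback loop, if γ₁ := γ(ρ⁻¹∘H₁∘ρ) < ∞ and γ₂ := γ(ρ∘H₂∘ρ⁻¹) < ∞ with γ₁γ₂ < 1, where γ(H) allows an additive bias (‖Hx‖_T ≤ δ‖x‖_T + β), then the map (u₁,u₂) ↦ (e₁,e₂) has finite gain: there exist C, β' with ‖e₁‖_T + ‖e₂‖_T ≤ C(‖u₁‖_T + ‖u₂‖_T) + β' for all T. -/

import Mathlib

noncomputable section

variable {E : Type*} [NormedAddCommGroup E] [InnerProductSpace ℝ E]

/-- Truncation operator `P_T`. -/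
def trunc (T : ℤ) (x : ℤ → E) : ℤ → E := fun t => if t ≤ T then x t else 0

/-- Membership in the extended signal space `S_e^n`: left-bounded support. -/
def SeP (x : ℤ → E) : Prop := ∃ a : ℤ, ∀ t, t < a → x t = 0

/-- Truncated inner product. -/
def innerT (T : ℤ) (x y : ℤ → E) : ℝ := ∑' t : ℤ, (inner ℝ (trunc T x t) (trunc T y t) : ℝ)

/-- Truncated norm `‖x‖_T`. -/
def normT (T : ℤ) (x : ℤ → E) : ℝ := Real.sqrt (innerT T x x)

/-- Membership in `S^n`: an extended-space signal with uniformly bounded truncated norms. -/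
def memS (x : ℤ → E) : Prop := SeP x ∧ ∃ M : ℝ, ∀ T : ℤ, normT T x ≤ M

/-- The action of `ρ > 0` on signals: `(ρ ∘ x)(t) = ρᵗ x(t)`. -/
def rhoAct (ρ : ℝ) (x : ℤ → E) : ℤ → E := fun t => ρ ^ t • x t

/-- The direct-chain operator `ρ⁻¹ ∘ H₁ ∘ ρ`. -/
def dirOp (ρ : ℝ) (H1 : (ℤ → E) → (ℤ → E)) : (ℤ → E) → (ℤ → E) :=
  fun x => rhoAct ρ⁻¹ (H1 (rhoAct ρ x))

/-- The feedback-chain operator `ρ ∘ H₂ ∘ ρ⁻¹`. -/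
def fbOp (ρ : ℝ) (H2 : (ℤ → E) → (ℤ → E)) : (ℤ → E) → (ℤ → E) :=
  fun x => rhoAct ρ (H2 (rhoAct ρ⁻¹ x))

/-- The set whose infimum is the unbiased gain `γ⁰(H)`. -/
def gainSet (H : (ℤ → E) → (ℤ → E)) : Set ℝ :=
  {δ : ℝ | 0 ≤ δ ∧ ∀ x, SeP x → ∀ T : ℤ, normT T (H x) ≤ δ * normT T x}

/-- The set whose infimum is the biased gain `γ(H)`. -/
def gainSetB (H : (ℤ → E) → (ℤ → E)) : Set ℝ :=
  {δ : ℝ | 0 ≤ δ ∧ ∃ β : ℝ, ∀ x, SeP x → ∀ T : ℤ, normT T (H x) ≤ δ * normT T x + β}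

/-! Choose admissible gains `δ₁, δ₂` close enough to the infima that `δ₁ δ₂ < 1`. On left-bounded
signals `‖·‖_T` is the Euclidean norm of the finite window up to `T`, so it obeys the triangle
inequality, and the loop equations give `‖e₁‖_T ≤ ‖u₁‖_T + δ₂ ‖e₂‖_T + β₂` and
`‖e₂‖_T ≤ ‖u₂‖_T + δ₁ ‖e₁‖_T + β₁`. Substituting each bound into the other and dividing by
`1 - δ₁ δ₂` bounds both errors. -/

omit [InnerProductSpace ℝ E] in
theorem SeP.add {x y : ℤ → E} (hx : SeP x) (hy : SeP y) : SeP (x + y) := by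
  obtain ⟨a, ha⟩ := hx
  obtain ⟨b, hb⟩ := hy
  refine ⟨min a b, fun t ht => ?_⟩
  rw [Pi.add_apply, ha t (ht.trans_le (min_le_left a b)), hb t (ht.trans_le (min_le_right a b)),
    add_zero]

omit [InnerProductSpace ℝ E] in
theorem SeP.neg {x : ℤ → E} (hx : SeP x) : SeP (-x) := by
  obtain ⟨a, ha⟩ := hx
  exact ⟨a, fun t ht => by rw [Pi.neg_apply, ha t ht, neg_zero]⟩

omit [InnerProductSpace ℝ E] in
theorem SeP.sub {x y : ℤ → E} (hx : SeP x) (hy : SeP y) : SeP (x - y) := by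
  rw [sub_eq_add_neg]
  exact hx.add hy.neg

theorem normT_nonneg (T : ℤ) (x : ℤ → E) : 0 ≤ normT T x := Real.sqrt_nonneg _

theorem normT_neg (T : ℤ) (x : ℤ → E) : normT T (-x) = normT T x := by
  unfold normT innerT trunc
  congr 1
  refine tsum_congr fun t => ?_
  split_ifs <;> simp

theorem normT_eq_sqrt_sum {c : ℤ} {x : ℤ → E} (hx : ∀ t < c, x t = 0) (T : ℤ) :
    normT T x = √(∑ t ∈ Finset.Icc c T, ‖x t‖ ^ 2) := by
  rw [normT, innerT, tsum_eq_sum (s := Finset.Icc c T)]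
  · refine congrArg _ (Finset.sum_congr rfl fun t ht => ?_)
    rw [trunc, if_pos (Finset.mem_Icc.mp ht).2, real_inner_self_eq_norm_sq]
  · intro t ht
    rcases lt_or_ge t c with htc | htc
    · simp [trunc, hx t htc]
    · have hTt : ¬ t ≤ T := fun h => ht (Finset.mem_Icc.mpr ⟨htc, h⟩)
      simp [trunc, hTt]

theorem normT_eq_norm_toLp {c : ℤ} {x : ℤ → E} (hx : ∀ t < c, x t = 0) (T : ℤ) :
    normT T x = ‖WithLp.toLp 2 (fun t : Finset.Icc c T => x t)‖ := by
  rw [normT_eq_sqrt_sum hx, PiLp.norm_eq_of_L2, ← Finset.sum_coe_sort]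

theorem normT_add_le {x y : ℤ → E} (hx : SeP x) (hy : SeP y) (T : ℤ) :
    normT T (x + y) ≤ normT T x + normT T y := by
  obtain ⟨a, ha⟩ := hx
  obtain ⟨b, hb⟩ := hy
  have hx' : ∀ t < min a b, x t = 0 := fun t ht => ha t (ht.trans_le (min_le_left a b))
  have hy' : ∀ t < min a b, y t = 0 := fun t ht => hb t (ht.trans_le (min_le_right a b))
  have hxy : ∀ t < min a b, (x + y) t = 0 := fun t ht => by
    rw [Pi.add_apply, hx' t ht, hy' t ht, add_zero]
  rw [normT_eq_norm_toLp hx', normT_eq_norm_toLp hy', normT_eq_norm_toLp hxy]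
  exact norm_add_le (WithLp.toLp 2 fun t : Finset.Icc (min a b) T => x t)
    (WithLp.toLp 2 fun t => y t)

theorem normT_sub_le {x y : ℤ → E} (hx : SeP x) (hy : SeP y) (T : ℤ) :
    normT T (x - y) ≤ normT T x + normT T y := by
  rw [sub_eq_add_neg, ← normT_neg T y]
  exact normT_add_le hx hy.neg T

theorem exists_mem_mul_lt_one_of_csInf_mul_lt_one {S : Set ℝ} (hS : S.Nonempty) {c : ℝ}
    (hc : 0 ≤ c) (h : sInf S * c < 1) : ∃ δ ∈ S, δ * c < 1 := by
  rcases hc.eq_or_lt with rfl | hc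
  · obtain ⟨δ, hδ⟩ := hS
    exact ⟨δ, hδ, by simp⟩
  · obtain ⟨δ, hδS, hδ⟩ := exists_lt_of_csInf_lt hS ((lt_div_iff₀ hc).mpr h)
    exact ⟨δ, hδS, (lt_div_iff₀ hc).mp hδ⟩

theorem gainSetB_nonneg {H : (ℤ → E) → (ℤ → E)} {δ : ℝ} (hδ : δ ∈ gainSetB H) : 0 ≤ δ := hδ.1

theorem exists_mem_gainSetB_mul_lt_one {H₁ H₂ : (ℤ → E) → (ℤ → E)}
    (h₁ : (gainSetB H₁).Nonempty) (h₂ : (gainSetB H₂).Nonempty)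
    (h : sInf (gainSetB H₁) * sInf (gainSetB H₂) < 1) :
    ∃ δ₁ ∈ gainSetB H₁, ∃ δ₂ ∈ gainSetB H₂, δ₁ * δ₂ < 1 := by
  obtain ⟨δ₁, hδ₁, hδ₁γ₂⟩ := exists_mem_mul_lt_one_of_csInf_mul_lt_one h₁
    (Real.sInf_nonneg fun _ => gainSetB_nonneg) h
  obtain ⟨δ₂, hδ₂, hδ₂δ₁⟩ := exists_mem_mul_lt_one_of_csInf_mul_lt_one h₂
    (gainSetB_nonneg hδ₁) (by rwa [mul_comm])
  exact ⟨δ₁, hδ₁, δ₂, hδ₂, by rwa [mul_comm]⟩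

theorem add_le_of_small_gain {n₁ n₂ m₁ m₂ δ₁ δ₂ β₁ β₂ : ℝ} (hδ₁ : 0 ≤ δ₁) (hδ₂ : 0 ≤ δ₂)
    (hδ : δ₁ * δ₂ < 1) (hm₁ : 0 ≤ m₁) (hm₂ : 0 ≤ m₂)
    (h₁ : n₁ ≤ m₁ + (δ₂ * n₂ + β₂)) (h₂ : n₂ ≤ m₂ + (δ₁ * n₁ + β₁)) :
    n₁ + n₂ ≤ (1 + δ₁ + δ₂) / (1 - δ₁ * δ₂) * (m₁ + m₂)
      + ((1 + δ₂) * β₁ + (1 + δ₁) * β₂) / (1 - δ₁ * δ₂) := by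
  have hk : 0 < 1 - δ₁ * δ₂ := by linarith
  -- eliminate `n₂` from `h₁` and `n₁` from `h₂`
  have key₁ : (1 - δ₁ * δ₂) * n₁ ≤ m₁ + δ₂ * m₂ + δ₂ * β₁ + β₂ := by
    nlinarith [mul_le_mul_of_nonneg_left h₂ hδ₂]
  have key₂ : (1 - δ₁ * δ₂) * n₂ ≤ δ₁ * m₁ + m₂ + β₁ + δ₁ * β₂ := by
    nlinarith [mul_le_mul_of_nonneg_left h₁ hδ₁]
  rw [div_mul_eq_mul_div, ← add_div, le_div_iff₀ hk]
  nlinarith [mul_nonneg hδ₂ hm₁, mul_nonneg hδ₁ hm₂]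

theorem stmt9_general (ρ : ℝ) (H1 H2 : (ℤ → E) → (ℤ → E))
    (hg1 : (gainSetB (dirOp ρ H1)).Nonempty)
    (hg2 : (gainSetB (fbOp ρ H2)).Nonempty)
    (hsmall : sInf (gainSetB (dirOp ρ H1)) * sInf (gainSetB (fbOp ρ H2)) < 1) :
    ∃ C β' : ℝ, ∀ u1 u2 e1 e2 : ℤ → E,
      SeP u1 → SeP u2 → SeP e1 → SeP e2 →
      e1 = u1 - fbOp ρ H2 e2 → e2 = u2 + dirOp ρ H1 e1 →
      ∀ T : ℤ, normT T e1 + normT T e2 ≤ C * (normT T u1 + normT T u2) + β' := by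
  obtain ⟨δ1, ⟨hδ1, β1, hH1⟩, δ2, ⟨hδ2, β2, hH2⟩, hδ⟩ :=
    exists_mem_gainSetB_mul_lt_one hg1 hg2 hsmall
  refine ⟨(1 + δ1 + δ2) / (1 - δ1 * δ2), ((1 + δ2) * β1 + (1 + δ1) * β2) / (1 - δ1 * δ2),
    fun u1 u2 e1 e2 hu1 hu2 he1 he2 hloop1 hloop2 T => ?_⟩
  have hfb : SeP (fbOp ρ H2 e2) := by
    rw [eq_sub_iff_add_eq, ← eq_sub_iff_add_eq'] at hloop1
    exact hloop1 ▸ hu1.sub he1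
  have hdir : SeP (dirOp ρ H1 e1) := by
    rw [← sub_eq_iff_eq_add'] at hloop2
    exact hloop2 ▸ he2.sub hu2
  refine add_le_of_small_gain hδ1 hδ2 hδ (normT_nonneg T u1) (normT_nonneg T u2) ?_ ?_
  · calc normT T e1 ≤ normT T u1 + normT T (fbOp ρ H2 e2) := hloop1 ▸ normT_sub_le hu1 hfb T
      _ ≤ _ := add_le_add_right (hH2 e2 he2 T) _
  · calc normT T e2 ≤ normT T u2 + normT T (dirOp ρ H1 e1) := hloop2 ▸ normT_add_le hu2 hdir T
      _ ≤ _ := add_le_add_right (hH1 e1 he1 T) _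

/-- (Extended small gain theorem, version (i)) For the well-posed loop
`e₁ = u₁ - (ρ∘H₂∘ρ⁻¹)e₂`, `e₂ = u₂ + (ρ⁻¹∘H₁∘ρ)e₁`, if the biased gains satisfy
`γ₁ := γ(ρ⁻¹∘H₁∘ρ) < ∞`, `γ₂ := γ(ρ∘H₂∘ρ⁻¹) < ∞` and `γ₁γ₂ < 1`, then the map
`(u₁,u₂) ↦ (e₁,e₂)` has finite gain: there are `C, β'` with
`‖e₁‖_T + ‖e₂‖_T ≤ C(‖u₁‖_T + ‖u₂‖_T) + β'` for all `T`. -/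
theorem stmt9 (ρ : ℝ) (hρ : 0 < ρ) (H1 H2 : (ℤ → E) → (ℤ → E))
    (hg1 : (gainSetB (dirOp ρ H1)).Nonempty)
    (hg2 : (gainSetB (fbOp ρ H2)).Nonempty)
    (hsmall : sInf (gainSetB (dirOp ρ H1)) * sInf (gainSetB (fbOp ρ H2)) < 1) :
    ∃ C β' : ℝ, ∀ u1 u2 e1 e2 : ℤ → E,
      SeP u1 → SeP u2 → SeP e1 → SeP e2 →
      e1 = u1 - fbOp ρ H2 e2 → e2 = u2 + dirOp ρ H1 e1 →
      ∀ T : ℤ, normT T e1 + normT T e2 ≤ C * (normT T u1 + normT T u2) + β' :=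
  stmt9_general ρ H1 H2 hg1 hg2 hsmall
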